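/- Let n ≥ 1, β > 0, Z > 0, let V : ℝⁿ → ℝ be twice continuously differentiable with ∫ e^{−βV(x)} dx < ∞, and set ρ_ss(x) := Z⁻¹ e^{−βV(x)}. Let A : ℝⁿ → ℝ^{n×n} be continuously differentiable with A(x) symmetric for every x, let s : ℝⁿ × ℝⁿ → [0,∞) be measurable with s(x,y) = s(y,x) for all x, y, and set k(x,y) := e^{−β(V(y) − V(x))/2} s(x,y). Assume ∫_{ℝⁿ} k(x,y) dy < ∞ for every x, and that for every compact set S ⊆ ℝⁿ the function (x,y) ↦ k(x,y)e^{−βV(x)} is integrable on S × ℝⁿ and on ℝⁿ × S. Define the generator 𝓛f(x) := −(A(x)∇V(x))·∇f(x) + β⁻¹∇·(A(x)∇f(x)) + ∫_{ℝⁿ}(f(y) − f(x))k(x,y) dy. Then for all smooth compactly supported f, g : ℝⁿ → ℝ, ∫_{ℝⁿ} f(x) 𝓛g(x) ρ_ss(x) dx = ∫_{ℝⁿ} g(x) 𝓛f(x) ρ_ss(x) dx. -/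

import Mathlib

/-!
Write `e = exp (-β V)`, so that `ρss = Z⁻¹ e`. By the product rule,
`β⁻¹ div (f e A∇g) = f (-(A∇V)·∇g + β⁻¹ div (A∇g)) e + β⁻¹ e ∇f·A∇g`, and the divergence of a
compactly supported `C¹` field integrates to zero; so the drift–diffusion part of `∫ f 𝓛g e` is
`-β⁻¹ ∫ e ∇f·A∇g`, which is symmetric in `f, g` because `A` is. The jump part is
`∫∫ f(x) (g(y) - g(x)) K(x, y)` with `K(x, y) = k(x, y) e(x)`; detailed balance makes `K` symmetric,
so exchanging `x` and `y` under Fubini shows that this form is symmetric as well.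
-/

open MeasureTheory Matrix

/-- The gradient of a scalar function on `ℝⁿ`, given by the partial derivatives. -/
noncomputable def grad {n : ℕ} (f : (Fin n → ℝ) → ℝ) (x : Fin n → ℝ) : Fin n → ℝ :=
  fun i => fderiv ℝ f x (Pi.single i 1)

/-- The divergence of a vector field on `ℝⁿ`. -/
noncomputable def dive {n : ℕ} (v : (Fin n → ℝ) → (Fin n → ℝ)) (x : Fin n → ℝ) : ℝ :=
  ∑ i, fderiv ℝ (fun y => v y i) x (Pi.single i 1)

lemma Matrix.IsSymm.dotProduct_mulVec_comm {m R : Type*} [Fintype m] [CommSemiring R]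
    {M : Matrix m m R} (hM : M.IsSymm) (v w : m → R) : v ⬝ᵥ (M *ᵥ w) = w ⬝ᵥ (M *ᵥ v) := by
  rw [dotProduct_mulVec, ← mulVec_transpose, hM.eq, dotProduct_comm]

lemma integral_fderiv_apply_eq_zero {E : Type*} [NormedAddCommGroup E] [NormedSpace ℝ E]
    [FiniteDimensional ℝ E] [MeasurableSpace E] [BorelSpace E] {μ : Measure E}
    [μ.IsAddHaarMeasure] {g : E → ℝ} (hg : ContDiff ℝ 1 g) (hgc : HasCompactSupport g) (w : E) :
    ∫ x, fderiv ℝ g x w ∂μ = 0 := by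
  have h := integral_mul_fderiv_eq_neg_fderiv_mul_of_integrable (μ := μ) (f := fun _ => (1 : ℝ))
    (g := g) (v := w) (by simp) ?_ ?_ (fun x _ => differentiableAt_const _)
    (fun x _ => hg.differentiable one_ne_zero x)
  · simpa using h
  · simpa using ((hg.continuous_fderiv one_ne_zero).clm_apply continuous_const
      |>.integrable_of_hasCompactSupport (hgc.fderiv_apply ℝ w))
  · simpa using hg.continuous.integrable_of_hasCompactSupport hgc

section VectorCalculus

variable {n : ℕ}

lemma grad_dotProduct (f : (Fin n → ℝ) → ℝ) (x v : Fin n → ℝ) :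
    grad f x ⬝ᵥ v = fderiv ℝ f x v := by
  conv_rhs => rw [← Finset.univ_sum_single v]
  simp only [map_sum, dotProduct, grad]
  refine Finset.sum_congr rfl fun i _ => ?_
  have : Pi.single i (v i) = v i • Pi.single (M := fun _ => ℝ) i 1 := by
    rw [← Pi.single_smul', smul_eq_mul, mul_one]
  rw [this, map_smul, smul_eq_mul, mul_comm]

lemma ContDiff.continuous_grad {f : (Fin n → ℝ) → ℝ} (hf : ContDiff ℝ 1 f) :
    Continuous (grad f) :=
  continuous_pi fun _ => (hf.continuous_fderiv one_ne_zero).clm_apply continuous_const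

lemma ContDiff.continuous_dive {v : (Fin n → ℝ) → Fin n → ℝ} (hv : ContDiff ℝ 1 v) :
    Continuous (dive v) :=
  continuous_finsetSum _ fun i _ =>
    ((contDiff_pi.1 hv i).continuous_fderiv one_ne_zero).clm_apply continuous_const

lemma HasCompactSupport.grad {f : (Fin n → ℝ) → ℝ} (hf : HasCompactSupport f) :
    HasCompactSupport (grad f) :=
  show HasCompactSupport ((fun (L : (Fin n → ℝ) →L[ℝ] ℝ) i => L (Pi.single i 1)) ∘ fderiv ℝ f) from
    (hf.fderiv ℝ).comp_left (by ext; simp)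

lemma HasCompactSupport.dive {v : (Fin n → ℝ) → Fin n → ℝ} (hv : HasCompactSupport v) :
    HasCompactSupport (dive v) := by
  have hsum : _root_.dive v = ∑ i, fun x => fderiv ℝ (fun y => v y i) x (Pi.single i 1) := by
    ext x
    simp [_root_.dive]
  rw [hsum]
  exact HasCompactSupport.finset_sum fun i _ =>
    (hv.comp_left (g := fun w : Fin n → ℝ => w i) rfl).fderiv_apply ℝ (Pi.single i 1)

lemma integral_dive_eq_zero {v : (Fin n → ℝ) → Fin n → ℝ} (hv : ContDiff ℝ 1 v)
    (hvc : HasCompactSupport v) : ∫ x, dive v x = 0 := by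
  have hvi : ∀ i, HasCompactSupport fun y => v y i := fun i =>
    hvc.comp_left (g := fun w : Fin n → ℝ => w i) rfl
  unfold dive
  rw [integral_finsetSum]
  · exact Finset.sum_eq_zero fun i _ =>
      integral_fderiv_apply_eq_zero (contDiff_pi.1 hv i) (hvi i) _
  · exact fun i _ => (((contDiff_pi.1 hv i).continuous_fderiv one_ne_zero).clm_apply
      continuous_const).integrable_of_hasCompactSupport ((hvi i).fderiv_apply ℝ _)

lemma dive_smul {φ : (Fin n → ℝ) → ℝ} {v : (Fin n → ℝ) → Fin n → ℝ} {x : Fin n → ℝ}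
    (hφ : DifferentiableAt ℝ φ x) (hv : DifferentiableAt ℝ v x) :
    dive (fun y => φ y • v y) x = fderiv ℝ φ x (v x) + φ x * dive v x := by
  have hvi : ∀ i, DifferentiableAt ℝ (fun y => v y i) x := fun i => differentiableAt_pi.1 hv i
  rw [← grad_dotProduct]
  simp only [dive, Pi.smul_apply, smul_eq_mul, fderiv_fun_mul hφ (hvi _), dotProduct,
    Finset.mul_sum, ← Finset.sum_add_distrib]
  refine Finset.sum_congr rfl fun i _ => ?_
  simp only [grad, _root_.add_apply, _root_.smul_apply, smul_eq_mul]
  ring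

end VectorCalculus

noncomputable def driftDiffusionOp {n : ℕ} (β : ℝ) (V : (Fin n → ℝ) → ℝ)
    (A : (Fin n → ℝ) → Matrix (Fin n) (Fin n) ℝ) (f : (Fin n → ℝ) → ℝ) (x : Fin n → ℝ) : ℝ :=
  (-(A x *ᵥ grad V x)) ⬝ᵥ grad f x + β⁻¹ * dive (fun y => A y *ᵥ grad f y) x

section DriftDiffusion

variable {n : ℕ} {β : ℝ} {V f g : (Fin n → ℝ) → ℝ} {x : Fin n → ℝ}
  {A : (Fin n → ℝ) → Matrix (Fin n) (Fin n) ℝ}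

lemma contDiff_mulVec_grad (hA : ∀ i j, ContDiff ℝ 1 fun x => A x i j) (hg : ContDiff ℝ 2 g) :
    ContDiff ℝ 1 fun x => A x *ᵥ grad g x := by
  refine contDiff_pi.2 fun i => ?_
  simp only [mulVec, dotProduct]
  exact ContDiff.sum fun j _ =>
    (hA i j).mul ((hg.fderiv_right (m := 1) le_rfl).clm_apply contDiff_const)

lemma continuous_driftDiffusionOp (hV : ContDiff ℝ 1 V)
    (hA : ∀ i j, ContDiff ℝ 1 fun x => A x i j) (hg : ContDiff ℝ 2 g) :
    Continuous (driftDiffusionOp β V A g) := by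
  have hAc : Continuous A := continuous_pi fun i => continuous_pi fun j => (hA i j).continuous
  exact ((hAc.matrix_mulVec hV.continuous_grad).neg.dotProduct
    (hg.of_le one_le_two).continuous_grad).add
    (continuous_const.mul (contDiff_mulVec_grad hA hg).continuous_dive)

lemma mul_driftDiffusionOp_mul_exp (hβ : β ≠ 0) (hV : DifferentiableAt ℝ V x)
    (hf : DifferentiableAt ℝ f x) (hA : (A x).IsSymm)
    (hu : DifferentiableAt ℝ (fun y => A y *ᵥ grad g y) x) :
    f x * driftDiffusionOp β V A g x * Real.exp (-β * V x) =
      β⁻¹ * dive (fun y => (f y * Real.exp (-β * V y)) • (A y *ᵥ grad g y)) x -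
        β⁻¹ * (Real.exp (-β * V x) * (grad f x ⬝ᵥ (A x *ᵥ grad g x))) := by
  have he : DifferentiableAt ℝ (fun y => Real.exp (-β * V y)) x := (hV.const_mul (-β)).exp
  rw [dive_smul (hf.fun_mul he) hu, fderiv_fun_mul hf he, fderiv_exp (hV.const_mul (-β)),
    fderiv_const_mul hV, driftDiffusionOp, neg_dotProduct, dotProduct_comm,
    hA.dotProduct_mulVec_comm, grad_dotProduct, grad_dotProduct]
  simp only [_root_.add_apply, _root_.smul_apply, smul_eq_mul]
  field_simp
  ring

lemma integral_mul_driftDiffusionOp_mul_exp (hβ : β ≠ 0) (hV : ContDiff ℝ 1 V)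
    (hf : ContDiff ℝ 1 f) (hfc : HasCompactSupport f)
    (hA : ∀ i j, ContDiff ℝ 1 fun x => A x i j) (hAsymm : ∀ x, (A x).IsSymm)
    (hg : ContDiff ℝ 2 g) :
    ∫ x, f x * driftDiffusionOp β V A g x * Real.exp (-β * V x) =
      -β⁻¹ * ∫ x, Real.exp (-β * V x) * (grad f x ⬝ᵥ (A x *ᵥ grad g x)) := by
  have hu := contDiff_mulVec_grad hA hg
  have he : ContDiff ℝ 1 fun y => Real.exp (-β * V y) := (contDiff_const.mul hV).exp
  have hW : ContDiff ℝ 1 fun y => (f y * Real.exp (-β * V y)) • (A y *ᵥ grad g y) :=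
    (hf.mul he).smul hu
  have hWc : HasCompactSupport fun y => (f y * Real.exp (-β * V y)) • (A y *ᵥ grad g y) :=
    hfc.mul_right.smul_right
  have hdiv : Integrable (dive fun y => (f y * Real.exp (-β * V y)) • (A y *ᵥ grad g y)) :=
    hW.continuous_dive.integrable_of_hasCompactSupport hWc.dive
  have hdir : Integrable fun x => Real.exp (-β * V x) * (grad f x ⬝ᵥ (A x *ᵥ grad g x)) :=
    (he.continuous.mul (hf.continuous_grad.dotProduct hu.continuous))
      |>.integrable_of_hasCompactSupport (hfc.grad.mono fun x hx h => hx (by simp [h]))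
  rw [integral_congr_ae (ae_of_all _ fun x => mul_driftDiffusionOp_mul_exp hβ
      (hV.differentiable one_ne_zero x) (hf.differentiable one_ne_zero x) (hAsymm x)
      (hu.differentiable one_ne_zero x)),
    integral_sub (hdiv.const_mul _) (hdir.const_mul _), integral_const_mul, integral_const_mul,
    integral_dive_eq_zero hW hWc]
  ring

end DriftDiffusion

section Jump

variable {α : Type*} [MeasurableSpace α] {μ : Measure α}

lemma integral_integral_mul_sub_mul_comm [SFinite μ] {K : α → α → ℝ}
    (hK : ∀ x y, K x y = K y x) {f g : α → ℝ}
    (hfg : Integrable (fun p : α × α => f p.1 * (g p.2 - g p.1) * K p.1 p.2) (μ.prod μ))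
    (hgf : Integrable (fun p : α × α => g p.1 * (f p.2 - f p.1) * K p.1 p.2) (μ.prod μ)) :
    ∫ x, ∫ y, f x * (g y - g x) * K x y ∂μ ∂μ = ∫ x, ∫ y, g x * (f y - f x) * K x y ∂μ ∂μ := by
  rw [← integral_prod _ hfg, ← integral_prod _ hgf, ← sub_eq_zero, ← integral_sub hfg hgf]
  set H : α × α → ℝ := fun p =>
    f p.1 * (g p.2 - g p.1) * K p.1 p.2 - g p.1 * (f p.2 - f p.1) * K p.1 p.2
  have hanti : ∀ p, H p.swap = -H p := fun p => by
    simp only [H, Prod.fst_swap, Prod.snd_swap, hK p.2 p.1]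
    ring
  have hswap : ∫ p, H p.swap ∂μ.prod μ = ∫ p, H p ∂μ.prod μ := integral_prod_swap H
  rw [funext hanti, integral_neg] at hswap
  linarith

variable [TopologicalSpace α] [OpensMeasurableSpace α]

lemma integrable_mul_sub_mul_of_integrableOn {K : α × α → ℝ} {f g : α → ℝ}
    (hf : Continuous f) (hfc : HasCompactSupport f) (hg : Continuous g) (hgc : HasCompactSupport g)
    (hK : IntegrableOn K (tsupport f ×ˢ Set.univ) (μ.prod μ)) :
    Integrable (fun p : α × α => f p.1 * (g p.2 - g p.1) * K p) (μ.prod μ) := by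
  obtain ⟨Cf, hCf⟩ := hfc.exists_bound_of_continuous hf
  obtain ⟨Cg, hCg⟩ := hgc.exists_bound_of_continuous hg
  refine IntegrableOn.integrable_of_forall_notMem_eq_zero
    (hK.bdd_mul (c := Cf * (Cg + Cg)) ?_ ?_) fun p hp => ?_
  · exact ((hf.measurable.comp measurable_fst).mul ((hg.measurable.comp measurable_snd).sub
      (hg.measurable.comp measurable_fst))).aestronglyMeasurable
  · refine ae_of_all _ fun p => ?_
    rw [norm_mul]
    exact mul_le_mul (hCf _) ((norm_sub_le _ _).trans (add_le_add (hCg _) (hCg _)))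
      (norm_nonneg _) ((norm_nonneg _).trans (hCf p.1))
  · simp [image_eq_zero_of_notMem_tsupport fun h => hp ⟨h, trivial⟩]

end Jump

lemma integral_mul_generator_mul_exp {n : ℕ} {β : ℝ} {V u w : (Fin n → ℝ) → ℝ}
    {A : (Fin n → ℝ) → Matrix (Fin n) (Fin n) ℝ} {k : (Fin n → ℝ) → (Fin n → ℝ) → ℝ}
    (hβ : β ≠ 0) (hV : ContDiff ℝ 1 V) (hA : ∀ i j, ContDiff ℝ 1 fun x => A x i j)
    (hAsymm : ∀ x, (A x).IsSymm) (hu : ContDiff ℝ 1 u) (huc : HasCompactSupport u)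
    (hw : ContDiff ℝ 2 w) (hwc : HasCompactSupport w)
    (hk : IntegrableOn (fun p : (Fin n → ℝ) × (Fin n → ℝ) => k p.1 p.2 * Real.exp (-β * V p.1))
      (tsupport u ×ˢ Set.univ)) :
    ∫ x, u x * (driftDiffusionOp β V A w x + ∫ y, (w y - w x) * k x y) * Real.exp (-β * V x) =
      (-β⁻¹ * ∫ x, Real.exp (-β * V x) * (grad u x ⬝ᵥ (A x *ᵥ grad w x))) +
        ∫ x, ∫ y, u x * (w y - w x) * (k x y * Real.exp (-β * V x)) := by
  have hdd : Integrable fun x => u x * driftDiffusionOp β V A w x * Real.exp (-β * V x) :=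
    ((hu.continuous.mul (continuous_driftDiffusionOp hV hA hw)).mul
      (hV.continuous.const_mul _).rexp).integrable_of_hasCompactSupport huc.mul_right.mul_right
  have hjump := (integrable_mul_sub_mul_of_integrableOn hu.continuous huc hw.continuous hwc
    hk).integral_prod_left
  have hsplit : ∀ x, u x * (driftDiffusionOp β V A w x + ∫ y, (w y - w x) * k x y) *
      Real.exp (-β * V x) = u x * driftDiffusionOp β V A w x * Real.exp (-β * V x) +
        ∫ y, u x * (w y - w x) * (k x y * Real.exp (-β * V x)) := fun x => by
    rw [mul_add, add_mul, ← integral_const_mul, ← integral_mul_const]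
    congr 2
    ext y
    ring
  rw [integral_congr_ae (ae_of_all _ hsplit), integral_add hdd hjump,
    integral_mul_driftDiffusionOp_mul_exp hβ hV hu huc hA hAsymm hw]

theorem stmt_10_general (n : ℕ) (β Z : ℝ) (hβ : 0 < β)
    (V : (Fin n → ℝ) → ℝ) (hV : ContDiff ℝ 2 V)
    (ρss : (Fin n → ℝ) → ℝ)
    (hρss : ∀ x, ρss x = Z⁻¹ * Real.exp (-β * V x))
    (A : (Fin n → ℝ) → Matrix (Fin n) (Fin n) ℝ)
    (hA : ∀ i j, ContDiff ℝ 1 fun x => A x i j) (hAsymm : ∀ x, (A x).IsSymm)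
    (s : (Fin n → ℝ) → (Fin n → ℝ) → ℝ)
    (hssymm : ∀ x y, s x y = s y x)
    (k : (Fin n → ℝ) → (Fin n → ℝ) → ℝ)
    (hk : ∀ x y, k x y = Real.exp (-β * (V y - V x) / 2) * s x y)
    (hkint1 : ∀ S : Set (Fin n → ℝ), IsCompact S →
      IntegrableOn (fun p : (Fin n → ℝ) × (Fin n → ℝ) => k p.1 p.2 * Real.exp (-β * V p.1))
        (S ×ˢ Set.univ))
    (L : ((Fin n → ℝ) → ℝ) → (Fin n → ℝ) → ℝ)
    (hL : ∀ f x, L f x = (-((A x) *ᵥ grad V x)) ⬝ᵥ grad f x +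
      β⁻¹ * dive (fun y => (A y) *ᵥ grad f y) x + ∫ y, (f y - f x) * k x y) :
    ∀ f g : (Fin n → ℝ) → ℝ,
      ContDiff ℝ (⊤ : ℕ∞) f → HasCompactSupport f →
      ContDiff ℝ (⊤ : ℕ∞) g → HasCompactSupport g →
      ∫ x, f x * L g x * ρss x = ∫ x, g x * L f x * ρss x := by
  intro f g hf hfc hg hgc
  have hf2 : ContDiff ℝ 2 f := hf.of_le (WithTop.coe_le_coe.mpr le_top)
  have hg2 : ContDiff ℝ 2 g := hg.of_le (WithTop.coe_le_coe.mpr le_top)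
  -- detailed balance: both sides equal `s x y * exp (-β (V x + V y) / 2)`
  have hK : ∀ x y, k x y * Real.exp (-β * V x) = k y x * Real.exp (-β * V y) := fun x y => by
    rw [hk, hk, hssymm y x, mul_right_comm, mul_right_comm _ (s x y), ← Real.exp_add,
      ← Real.exp_add]
    ring_nf
  have hLρ : ∀ u w : (Fin n → ℝ) → ℝ, ∫ x, u x * L w x * ρss x = Z⁻¹ * ∫ x, u x *
      (driftDiffusionOp β V A w x + ∫ y, (w y - w x) * k x y) * Real.exp (-β * V x) := by
    intro u w
    rw [← integral_const_mul]
    refine integral_congr_ae (ae_of_all _ fun x => ?_)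
    simp only [hL, hρss, driftDiffusionOp]
    ring
  have hV1 := hV.of_le one_le_two
  rw [hLρ, hLρ,
    integral_mul_generator_mul_exp hβ.ne' hV1 hA hAsymm (hf2.of_le one_le_two) hfc hg2 hgc
      (hkint1 _ hfc),
    integral_mul_generator_mul_exp hβ.ne' hV1 hA hAsymm (hg2.of_le one_le_two) hgc hf2 hfc
      (hkint1 _ hgc),
    integral_integral_mul_sub_mul_comm hK]
  · simp only [(hAsymm _).dotProduct_mulVec_comm (grad f _)]
  · exact integrable_mul_sub_mul_of_integrableOn hf2.continuous hfc hg2.continuous hgc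
      (hkint1 _ hfc)
  · exact integrable_mul_sub_mul_of_integrableOn hg2.continuous hgc hf2.continuous hfc
      (hkint1 _ hgc)

theorem stmt_10 (n : ℕ) (hn : 1 ≤ n) (β Z : ℝ) (hβ : 0 < β) (hZ : 0 < Z)
    (V : (Fin n → ℝ) → ℝ) (hV : ContDiff ℝ 2 V)
    (hVint : Integrable fun x => Real.exp (-β * V x))
    (ρss : (Fin n → ℝ) → ℝ)
    (hρss : ∀ x, ρss x = Z⁻¹ * Real.exp (-β * V x))
    (A : (Fin n → ℝ) → Matrix (Fin n) (Fin n) ℝ)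
    (hA : ∀ i j, ContDiff ℝ 1 fun x => A x i j) (hAsymm : ∀ x, (A x).IsSymm)
    (s : (Fin n → ℝ) → (Fin n → ℝ) → ℝ)
    (hsmeas : Measurable fun p : (Fin n → ℝ) × (Fin n → ℝ) => s p.1 p.2)
    (hsnonneg : ∀ x y, 0 ≤ s x y) (hssymm : ∀ x y, s x y = s y x)
    (k : (Fin n → ℝ) → (Fin n → ℝ) → ℝ)
    (hk : ∀ x y, k x y = Real.exp (-β * (V y - V x) / 2) * s x y)
    (hkint : ∀ x, Integrable fun y => k x y)
    (hkint1 : ∀ S : Set (Fin n → ℝ), IsCompact S →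
      IntegrableOn (fun p : (Fin n → ℝ) × (Fin n → ℝ) => k p.1 p.2 * Real.exp (-β * V p.1))
        (S ×ˢ Set.univ))
    (hkint2 : ∀ S : Set (Fin n → ℝ), IsCompact S →
      IntegrableOn (fun p : (Fin n → ℝ) × (Fin n → ℝ) => k p.1 p.2 * Real.exp (-β * V p.1))
        (Set.univ ×ˢ S))
    (L : ((Fin n → ℝ) → ℝ) → (Fin n → ℝ) → ℝ)
    (hL : ∀ f x, L f x = (-((A x) *ᵥ grad V x)) ⬝ᵥ grad f x +
      β⁻¹ * dive (fun y => (A y) *ᵥ grad f y) x + ∫ y, (f y - f x) * k x y) :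
    ∀ f g : (Fin n → ℝ) → ℝ,
      ContDiff ℝ (⊤ : ℕ∞) f → HasCompactSupport f →
      ContDiff ℝ (⊤ : ℕ∞) g → HasCompactSupport g →
      ∫ x, f x * L g x * ρss x = ∫ x, g x * L f x * ρss x :=
  stmt_10_general n β Z hβ V hV ρss hρss A hA hAsymm s hssymm k hk hkint1 L hL
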